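/- arXiv:math/0508354 — 2 statements merged into one kernel-verified Lean document; each statement's English description precedes it below -/
import Mathlib

section
/- Let h be a fully symmetric 3-tensor on ℝ² (i.e., h : Fin 2 → Fin 2 → Fin 2 → ℝ with h i j k invariant under all permutations of indices), and define H k = ∑ i, h i i k. Then ∑ k, (H k)² ≤ (4/3) * ∑ i j k, (h i j k)². -/
/-! Full symmetry leaves four independent entries `a = h₀₀₀`, `b = h₀₀₁`, `c = h₀₁₁`, `d = h₁₁₁`,
with `H = (a + c, b + d)` and `|A|² = a² + 3b² + 3c² + d²`. The inequality thus splits into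
`(a + c)² ≤ 4/3 (a² + 3c²)` and `(d + b)² ≤ 4/3 (d² + 3b²)`, both instances of Cauchy–Schwarz
with weights `(1, 3)`. -/

theorem sq_add_le_four_thirds_mul (x y : ℝ) : (x + y) ^ 2 ≤ 4 / 3 * (x ^ 2 + 3 * y ^ 2) := by
  nlinarith [sq_nonneg (x - 3 * y)]

section SymmetricThreeTensor

variable {h : Fin 2 → Fin 2 → Fin 2 → ℝ}

theorem sum_sq_trace_eq_of_symm (hsym1 : ∀ i j k, h i j k = h j i k)
    (hsym2 : ∀ i j k, h i j k = h i k j) :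
    ∑ k, (∑ i, h i i k) ^ 2 = (h 0 0 0 + h 0 1 1) ^ 2 + (h 1 1 1 + h 0 0 1) ^ 2 := by
  have h110 : h 1 1 0 = h 0 1 1 := by rw [hsym2, hsym1]
  simp only [Fin.sum_univ_two, h110]
  ring

theorem sum_sq_entries_eq_of_symm (hsym1 : ∀ i j k, h i j k = h j i k)
    (hsym2 : ∀ i j k, h i j k = h i k j) :
    ∑ i, ∑ j, ∑ k, h i j k ^ 2 =
      h 0 0 0 ^ 2 + 3 * h 0 0 1 ^ 2 + 3 * h 0 1 1 ^ 2 + h 1 1 1 ^ 2 := by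
  have h010 : h 0 1 0 = h 0 0 1 := hsym2 0 1 0
  have h100 : h 1 0 0 = h 0 0 1 := by rw [hsym1, hsym2]
  have h101 : h 1 0 1 = h 0 1 1 := hsym1 1 0 1
  have h110 : h 1 1 0 = h 0 1 1 := by rw [hsym2, hsym1]
  simp only [Fin.sum_univ_two, h010, h100, h101, h110]
  ring

end SymmetricThreeTensor

/-- For a fully symmetric 3-tensor `h` on ℝ², with `H k = ∑ i, h i i k`,
we have `∑ k, (H k)² ≤ (4/3) * ∑ i j k, (h i j k)²`. -/
theorem symmetric_three_tensor_trace_sq_le (h : Fin 2 → Fin 2 → Fin 2 → ℝ)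
    (hsym1 : ∀ i j k, h i j k = h j i k)
    (hsym2 : ∀ i j k, h i j k = h i k j) :
    ∑ k, (∑ i, h i i k) ^ 2 ≤ (4 / 3) * ∑ i, ∑ j, ∑ k, (h i j k) ^ 2 := by
  rw [sum_sq_trace_eq_of_symm hsym1 hsym2, sum_sq_entries_eq_of_symm hsym1 hsym2]
  linarith [sq_add_le_four_thirds_mul (h 0 0 0) (h 0 1 1),
    sq_add_le_four_thirds_mul (h 1 1 1) (h 0 0 1)]
end

section
/- Let c ∈ ℝ and α > 0, and let η : ℝ → ℝ be differentiable with η(0) ≥ α/√(1+α²), 0 < η(t) ≤ 1 for all t ≥ 0, and η'(t) ≥ c·η(t)·(1 - η(t)²) for all t ≥ 0. Then for all t ≥ 0, η(t) ≥ α·e^{ct}/√(1 + α²·e^{2ct}). -/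
/-- ODE comparison: a positive supersolution of `y' = c y (1 - y²)` bounded by 1
stays above the explicit solution `α e^{ct} / √(1 + α² e^{2ct})`. -/
theorem eta_lower_bound (c α : ℝ) (hα : 0 < α) (η η' : ℝ → ℝ)
    (hderiv : ∀ t, 0 ≤ t → HasDerivAt η (η' t) t)
    (h0 : η 0 ≥ α / Real.sqrt (1 + α ^ 2))
    (hpos : ∀ t, 0 ≤ t → 0 < η t)
    (hle : ∀ t, 0 ≤ t → η t ≤ 1)
    (hineq : ∀ t, 0 ≤ t → η' t ≥ c * η t * (1 - (η t) ^ 2)) :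
    ∀ t, 0 ≤ t →
      η t ≥ α * Real.exp (c * t) / Real.sqrt (1 + α ^ 2 * Real.exp (2 * c * t)) := by
  set A : ℝ → ℝ := fun t => α ^ 2 * Real.exp (2 * c * t) with hAdef
  have hApos : ∀ t, 0 < A t := fun t => by positivity
  have h1A : ∀ t, 0 < 1 + A t := fun t => by positivity
  set v : ℝ → ℝ := fun t => A t / (1 + A t) with hvdef
  have hAc : Continuous A := by fun_prop
  have hvc : Continuous v := hAc.div (by fun_prop) fun t => (h1A t).ne'
  have hAd : ∀ t, HasDerivAt A (2 * c * A t) t := by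
    intro t
    have h1 : HasDerivAt (fun t : ℝ => 2 * c * t) (2 * c) t := by
      simpa using (hasDerivAt_id t).const_mul (2 * c)
    have h2 := (Real.hasDerivAt_exp (2 * c * t)).comp t h1
    have h3 := h2.const_mul (α ^ 2)
    convert h3 using 1
    · rfl
    · rfl
    all_goals simp [hAdef] <;> ring
  have hvd : ∀ t, HasDerivAt v (2 * c * v t * (1 - v t)) t := by
    intro t
    have h1 := (hAd t).div ((hAd t).const_add 1) (h1A t).ne'
    convert h1 using 1
    · rfl
    · rfl
    · rfl
    simp only [hvdef]
    have := (h1A t).ne'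
    field_simp
  -- the coefficient function
  set K : ℝ → ℝ := fun t => 2 * c * (1 - ((η (max t 0)) ^ 2 + v t)) with hKdef
  have hKc : Continuous K := by
    have hm : Continuous (fun t : ℝ => η (max t 0)) := by
      rw [continuous_iff_continuousAt]
      intro t
      have hinner : ContinuousAt (fun s : ℝ => max s 0) t := by fun_prop
      exact ContinuousAt.comp (g := η) ((hderiv _ (le_max_right t 0)).continuousAt) hinner
    exact continuous_const.mul (continuous_const.sub ((hm.pow 2).add hvc))
  set I : ℝ → ℝ := fun t => ∫ s in (0:ℝ)..t, K s with hIdef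
  have hId : ∀ t, HasDerivAt I (K t) t := by
    intro t
    exact intervalIntegral.integral_hasDerivAt_right (hKc.intervalIntegrable 0 t)
      (hKc.stronglyMeasurableAtFilter _ _) hKc.continuousAt
  set G : ℝ → ℝ := fun t => Real.exp (-(I t)) * ((η t) ^ 2 - v t) with hGdef
  have hGd : ∀ t, 0 ≤ t → HasDerivAt G
      ((-(K t) * Real.exp (-(I t))) * ((η t) ^ 2 - v t)
        + Real.exp (-(I t)) * (2 * η t * η' t - 2 * c * v t * (1 - v t))) t := by
    intro t ht
    have he : HasDerivAt (fun t => Real.exp (-(I t))) (-(K t) * Real.exp (-(I t))) t := by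
      have := (Real.hasDerivAt_exp (-(I t))).comp t ((hId t).neg)
      simpa [mul_comm, Function.comp_def] using this
    have hw : HasDerivAt (fun t => (η t) ^ 2) (2 * η t * η' t) t := by
      have := (hderiv t ht).pow 2
      simpa [mul_comm, mul_assoc, Pi.pow_def] using this
    exact he.mul (hw.sub (hvd t))
  have hGmono : MonotoneOn G (Set.Ici 0) := by
    apply monotoneOn_of_deriv_nonneg (convex_Ici 0)
    · intro t ht
      exact ((hGd t ht).continuousAt).continuousWithinAt
    · intro t ht
      rw [interior_Ici] at ht
      exact ((hGd t (le_of_lt ht)).differentiableAt).differentiableWithinAt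
    · intro t ht
      rw [interior_Ici] at ht
      rw [(hGd t ht.le).deriv]
      have hm : max t 0 = t := max_eq_left ht.le
      have hK : K t = 2 * c * (1 - ((η t) ^ 2 + v t)) := by simp [hKdef, hm]
      have h2 : 2 * c * (η t) ^ 2 * (1 - (η t) ^ 2) ≤ 2 * η t * η' t := by
        nlinarith [hineq t ht.le, hpos t ht.le]
      have idk : 2 * c * (η t) ^ 2 * (1 - (η t) ^ 2) - 2 * c * v t * (1 - v t)
          - (2 * c * (1 - ((η t) ^ 2 + v t))) * ((η t) ^ 2 - v t) = 0 := by ring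
      have hep := Real.exp_pos (-(I t))
      have key : 0 ≤ 2 * η t * η' t - 2 * c * v t * (1 - v t)
          - K t * ((η t) ^ 2 - v t) := by rw [hK]; linarith
      nlinarith [key, hep]
    done
  intro t ht
  have hG0 : 0 ≤ G 0 := by
    have hI0 : I 0 = 0 := by simp [hIdef]
    have hv0 : v 0 = α ^ 2 / (1 + α ^ 2) := by simp [hvdef, hAdef]
    have hrt : (0:ℝ) < Real.sqrt (1 + α ^ 2) := Real.sqrt_pos.mpr (by positivity)
    have h0' : (α / Real.sqrt (1 + α ^ 2)) ^ 2 ≤ (η 0) ^ 2 :=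
      pow_le_pow_left₀ (by positivity) h0 2
    have hsq : (α / Real.sqrt (1 + α ^ 2)) ^ 2 = α ^ 2 / (1 + α ^ 2) := by
      rw [div_pow, Real.sq_sqrt (by positivity : (0:ℝ) ≤ 1 + α ^ 2)]
    simp only [hGdef, hI0, neg_zero, Real.exp_zero, one_mul, hv0]
    rw [hsq] at h0'
    linarith
  have hGt : 0 ≤ G t := le_trans hG0 (hGmono Set.self_mem_Ici ht ht)
  have hwv : v t ≤ (η t) ^ 2 := by
    have hep := Real.exp_pos (-(I t))
    simp only [hGdef] at hGt
    nlinarith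
  -- translate to the goal
  have hyv : (α * Real.exp (c * t) / Real.sqrt (1 + A t)) ^ 2 = v t := by
    rw [div_pow, mul_pow, Real.sq_sqrt (h1A t).le]
    simp only [hvdef, hAdef]
    rw [show Real.exp (c * t) ^ 2 = Real.exp (2 * c * t) by rw [sq, ← Real.exp_add]; ring_nf]
  have hy0 : 0 ≤ α * Real.exp (c * t) / Real.sqrt (1 + A t) := by positivity
  have : (α * Real.exp (c * t) / Real.sqrt (1 + A t)) ^ 2 ≤ (η t) ^ 2 := by
    rw [hyv]; exact hwv
  have hfin := Real.sqrt_le_sqrt this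
  rw [Real.sqrt_sq hy0, Real.sqrt_sq (hpos t ht).le] at hfin
  exact hfin
end
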